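/- arXiv:2003.03082 — 2 statements merged into one kernel-verified Lean document; each statement's English description precedes it below -/
import Mathlib

section
/- Let ε be a primitive cube root of unity and L = Q(ε, ∛5). The norm equation N_{L/Q(ε)}(a) = 17 has a solution a ∈ L. -/
/-!
`s = ∛5 ^ 2` is a cube root of `25` that still generates `L` (as `∛5 = s ^ 2 / 5`), so
`N_{L/K}(s - 2) = 25 - 2 ^ 3 = 17` once `X ^ 3 - 25` is known to be the minimal polynomial of `s`.
It is irreducible over `K` because `25`, like `5`, is not a cube in `K`: `5` is not a cube in `ℚ`
(its `5`-adic valuation is `1`), so a cube root of `5` has degree `3` over `ℚ`, which does not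
divide `[K : ℚ] = 2`.
-/

open Polynomial

theorem PowerBasis.norm_gen_sub_algebraMap {R S : Type*} [CommRing R] [CommRing S] [Algebra R S]
    (pb : PowerBasis R S) (c : R) :
    Algebra.norm R (pb.gen - algebraMap R S c) = (-1) ^ pb.dim * (minpoly R pb.gen).eval c := by
  rw [Algebra.norm_eq_matrix_det pb.basis, ← neg_sub, map_neg, Matrix.det_neg, map_sub,
    AlgHom.commutes, ← charpoly_leftMulMatrix pb, Matrix.eval_charpoly, Fintype.card_fin]
  rfl

theorem Rat.pow_ne_prime {p n : ℕ} [Fact p.Prime] (hn : n ≠ 1) (q : ℚ) : q ^ n ≠ p := by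
  intro h
  have := congrArg (padicValRat p) h
  rw [padicValRat.pow, padicValRat.self (Fact.out : p.Prime).one_lt] at this
  have := Int.eq_one_of_mul_eq_one_right (by positivity) this
  omega

theorem minpoly_eq_X_pow_sub_C_of_prime {K L : Type*} [Field K] [Field L] [Algebra K L] {p : ℕ}
    (hp : p.Prime) {a : K} (ha : ∀ b : K, b ^ p ≠ a) {s : L} (hs : s ^ p = algebraMap K L a) :
    minpoly K s = X ^ p - C a :=
  (minpoly.eq_of_irreducible_of_monic (X_pow_sub_C_irreducible_of_prime hp ha) (by simp [hs])
    (monic_X_pow_sub_C a hp.ne_zero)).symm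

theorem pow_ne_algebraMap_of_not_dvd_finrank {k F : Type*} [Field k] [Field F] [Algebra k F]
    [FiniteDimensional k F] {p : ℕ} (hp : p.Prime) (hpF : ¬ p ∣ Module.finrank k F) {a : k}
    (ha : ∀ b : k, b ^ p ≠ a) (c : F) : c ^ p ≠ algebraMap k F a := by
  intro hc
  have := minpoly.degree_dvd (IsIntegral.of_finite k c)
  rw [minpoly_eq_X_pow_sub_C_of_prime hp ha hc, natDegree_X_pow_sub_C] at this
  exact hpF this

theorem cube_ne_five_of_isCyclotomicExtension_three (K : Type*) [Field K] [Algebra ℚ K]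
    [IsCyclotomicExtension {3} ℚ K] (c : K) : c ^ 3 ≠ 5 := by
  have : FiniteDimensional ℚ K := IsCyclotomicExtension.finiteDimensional {3} ℚ K
  have hK : Module.finrank ℚ K = 2 := by
    rw [IsCyclotomicExtension.finrank (n := 3) K (cyclotomic.irreducible_rat (by norm_num)),
      Nat.totient_prime Nat.prime_three]
  have : Fact (Nat.Prime 5) := ⟨by norm_num⟩
  simpa using pow_ne_algebraMap_of_not_dvd_finrank (k := ℚ) Nat.prime_three (by omega)
    (Rat.pow_ne_prime (p := 5) (by norm_num)) c

theorem norm_equation_seventeen_solvable_general (K : Type) [Field K] [Algebra ℚ K]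
    [IsCyclotomicExtension {3} ℚ K]
    (L : Type) [Field L] [Algebra K L]
    (r : L) (hr : r ^ 3 = 5) (hgen : Algebra.adjoin K {r} = ⊤) :
    ∃ a : L, Algebra.norm K a = 17 := by
  have : CharZero K := charZero_of_injective_algebraMap (algebraMap ℚ K).injective
  have h5 := cube_ne_five_of_isCyclotomicExtension_three K
  have h25 : ∀ c : K, c ^ 3 ≠ 25 := fun c hc ↦ h5 (c ^ 2 / 5) (by
    rw [div_pow, ← pow_mul, pow_mul', hc]; norm_num)
  set s := r ^ 2
  have hs : s ^ 3 = algebraMap K L 25 := by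
    rw [map_ofNat, ← pow_mul, mul_comm, pow_mul, hr]; norm_num
  have hmin : minpoly K s = X ^ 3 - C 25 := minpoly_eq_X_pow_sub_C_of_prime Nat.prime_three h25 hs
  have hsr : r = (5 : K)⁻¹ • s ^ 2 := by
    rw [Algebra.smul_def, ← pow_mul, show 2 * 2 = 3 + 1 from rfl, pow_succ, hr,
      ← map_ofNat (algebraMap K L) 5, map_inv₀,
      inv_mul_cancel_left₀ ((_root_.map_ne_zero _).2 (by norm_num))]
  have hadj : Algebra.adjoin K {s} = ⊤ := by
    refine top_unique (hgen ▸ Algebra.adjoin_le (Set.singleton_subset_iff.2 ?_))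
    rw [hsr]
    exact Subalgebra.smul_mem _ (pow_mem (Algebra.self_mem_adjoin_singleton K s) 2) _
  let pb := PowerBasis.ofAdjoinEqTop' (.of_pow three_pos (hs ▸ isIntegral_algebraMap)) hadj
  refine ⟨s - algebraMap K L 2, ?_⟩
  have hnorm := pb.norm_gen_sub_algebraMap 2
  simp only [pb, PowerBasis.ofAdjoinEqTop'_gen, PowerBasis.ofAdjoinEqTop'_dim, hmin] at hnorm
  rw [hnorm]
  norm_num

/-- Let `ε` be a primitive cube root of unity, `K = ℚ(ε)`, and `L = ℚ(ε, ∛5) = K(∛5)`. Then the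
norm equation `N_{L/K}(a) = 17` has a solution `a ∈ L`. -/
theorem norm_equation_seventeen_solvable (K : Type) [Field K] [Algebra ℚ K]
    [IsCyclotomicExtension {3} ℚ K] (ε : K) (hε : IsPrimitiveRoot ε 3)
    (L : Type) [Field L] [Algebra K L] [FiniteDimensional K L]
    (r : L) (hr : r ^ 3 = 5) (hgen : Algebra.adjoin K {r} = ⊤) :
    ∃ a : L, Algebra.norm K a = 17 :=
  norm_equation_seventeen_solvable_general K L r hr hgen
end

section
/- Let ε be a primitive cube root of unity and L = Q(ε, ∛5). The norm equation N_{L/Q(ε)}(a) = 19 has no solution a ∈ L. -/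
/-!
As `K` is quadratic over `ℚ`, comparing `5`-adic valuations of norms shows that `5` is not a cube
in `K`, so `1, r, r²` is a `K`-basis of `L` and the norm of `x + y r + z r²` is the cubic form
`x³ + 5y³ + 25z³ - 15xyz`. As `19 ≡ 1 (mod 3)`, Hensel's lemma puts a primitive cube root of unity
in `ℚ₁₉`, so `K` embeds into `ℚ₁₉` and it suffices to show that the form does not represent `19`
over `ℚ₁₉`. Because `5` is not a cube mod `19`, the form has no nontrivial zero mod `19`; scaling
`(x, y, z)` so that its largest coordinate becomes `1` then shows `‖x³ + 5y³ + 25z³ - 15xyz‖` is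
the cube of `max ‖x‖ ‖y‖ ‖z‖`, whereas `‖19‖ = 19⁻¹` is not a cube in `19 ^ ℤ`.
-/

open Polynomial

def cubicNormForm {R : Type*} [CommRing R] (c x y z : R) : R :=
  x ^ 3 + c * y ^ 3 + c ^ 2 * z ^ 3 - 3 * c * x * y * z

def IsAnisotropicCubicNormForm {R : Type*} [CommRing R] (c : R) : Prop :=
  ∀ x y z : R, cubicNormForm c x y z = 0 → x = 0 ∧ y = 0 ∧ z = 0

theorem map_cubicNormForm {R S F : Type*} [CommRing R] [CommRing S] [FunLike F R S]
    [RingHomClass F R S] (f : F) (c x y z : R) :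
    f (cubicNormForm c x y z) = cubicNormForm (f c) (f x) (f y) (f z) := by
  simp [cubicNormForm, map_ofNat]

theorem cubicNormForm_mul {R : Type*} [CommRing R] (c t x y z : R) :
    cubicNormForm c (t * x) (t * y) (t * z) = t ^ 3 * cubicNormForm c x y z := by
  unfold cubicNormForm
  ring

theorem cubicNormForm_zero {R : Type*} [CommRing R] (c : R) : cubicNormForm c 0 0 0 = 0 := by
  simp [cubicNormForm]

theorem isAnisotropicCubicNormForm_five_zmod_nineteen :
    IsAnisotropicCubicNormForm ((5 : ℤ) : ZMod 19) := by
  unfold IsAnisotropicCubicNormForm cubicNormForm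
  decide

theorem Algebra.norm_eq_cubicNormForm {K L : Type*} [CommRing K] [CommRing L] [Algebra K L]
    {c : K} {r : L} (b : Module.Basis (Fin 3) K L) (hb : ∀ i, b i = r ^ (i : ℕ))
    (hr : r ^ 3 = algebraMap K L c) (x y z : K) :
    Algebra.norm K (x • 1 + y • r + z • r ^ 2) = cubicNormForm c x y z := by
  set a := x • 1 + y • r + z • r ^ 2
  have hmat : Algebra.leftMulMatrix b a = !![x, c * z, c * y; y, x, c * z; z, y, x] := by
    rw [Algebra.leftMulMatrix_apply,
      ← LinearMap.toMatrix_toLin b b !![x, c * z, c * y; y, x, c * z; z, y, x]]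
    congr 1
    refine b.ext fun j ↦ ?_
    rw [Matrix.toLin_self]
    fin_cases j <;> simp only [a, hb, Fin.sum_univ_three, Algebra.smul_def,
      Algebra.coe_lmul_eq_mul, LinearMap.mul_apply_apply, Matrix.of_apply, Matrix.cons_val',
      Matrix.cons_val_zero, Matrix.cons_val_one, Matrix.cons_val, Matrix.cons_val_fin_one,
      Fin.isValue, Fin.zero_eta, Fin.mk_one, Fin.reduceFinMk, Fin.coe_ofNat_eq_mod, Nat.mod_succ,
      Nat.zero_mod, Nat.one_mod, pow_zero, pow_one, mul_one, map_mul]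
    · linear_combination algebraMap K L z * hr
    · linear_combination (algebraMap K L y + algebraMap K L z * r) * hr
  rw [Algebra.norm_eq_matrix_det b, hmat, Matrix.det_fin_three]
  simp only [Matrix.of_apply, Matrix.cons_val', Matrix.cons_val_zero, Matrix.cons_val_one,
    Matrix.cons_val, Matrix.cons_val_fin_one, cubicNormForm]
  ring

theorem PowerBasis.exists_norm_eq_cubicNormForm {K L : Type*} [CommRing K] [CommRing L]
    [Algebra K L] {c : K} (pb : PowerBasis K L) (hdim : pb.dim = 3)
    (hgen : pb.gen ^ 3 = algebraMap K L c) (a : L) :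
    ∃ x y z : K, Algebra.norm K a = cubicNormForm c x y z := by
  let b := pb.basis.reindex (finCongr hdim)
  have hb (i : Fin 3) : b i = pb.gen ^ (i : ℕ) := by simp [b]
  refine ⟨b.repr a 0, b.repr a 1, b.repr a 2, ?_⟩
  rw [← Algebra.norm_eq_cubicNormForm b hb hgen]
  conv_lhs => rw [← b.sum_repr a]
  simp [Fin.sum_univ_three, hb]

theorem PowerBasis.exists_gen_eq_of_irreducible_X_pow_sub_C {K L : Type*} [Field K] [CommRing L]
    [Nontrivial L] [Algebra K L] {n : ℕ} {c : K} {r : L} (hirr : Irreducible (X ^ n - C c))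
    (hr : r ^ n = algebraMap K L c) (hgen : Algebra.adjoin K {r} = ⊤) :
    ∃ pb : PowerBasis K L, pb.dim = n ∧ pb.gen = r := by
  have hn : n ≠ 0 := by simpa using hirr.natDegree_pos.ne'
  have hroot : aeval r (X ^ n - C c) = 0 := by simp [hr]
  have hmin := minpoly.eq_of_irreducible_of_monic hirr hroot (monic_X_pow_sub_C c hn)
  have hint : IsIntegral K r := ⟨_, monic_X_pow_sub_C c hn, by rwa [← aeval_def]⟩
  exact ⟨ofAdjoinEqTop hint hgen, by rw [ofAdjoinEqTop_dim, ← hmin, natDegree_X_pow_sub_C], rfl⟩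

theorem pow_ne_prime_of_not_dvd_finrank {K : Type*} [Field K] [Algebra ℚ K] {ℓ q : ℕ}
    (hq : q.Prime) (hℓ : ¬ ℓ ∣ Module.finrank ℚ K) (s : K) : s ^ ℓ ≠ q := by
  intro hs
  have : Fact q.Prime := ⟨hq⟩
  have hN : Algebra.norm ℚ s ^ ℓ = (q : ℚ) ^ Module.finrank ℚ K := by
    rw [← map_pow, hs, ← map_natCast (algebraMap ℚ K), Algebra.norm_algebraMap]
  have hval := congrArg (padicValRat q) hN
  rw [padicValRat.pow, padicValRat.pow, padicValRat.self hq.one_lt, mul_one] at hval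
  exact hℓ (Int.natCast_dvd_natCast.mp ⟨_, hval.symm⟩)

theorem IsCyclotomicExtension.nonempty_algHom_of_isPrimitiveRoot {n : ℕ} [NeZero n]
    {K L F : Type*} [Field K] [Field L] [Algebra K L] [IsCyclotomicExtension {n} K L]
    [Field F] [Algebra K F] {μ : F} (hμ : IsPrimitiveRoot μ n) : Nonempty (L →ₐ[K] F) :=
  have := isSplittingField_X_pow_sub_one n K L
  ⟨IsSplittingField.lift L (X ^ n - 1) (by simpa using X_pow_sub_one_splits hμ)⟩

section Padic

variable {p : ℕ} [Fact p.Prime] {c : ℤ}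

theorem PadicInt.toZMod_eq_zero_iff {x : ℤ_[p]} : toZMod x = 0 ↔ ‖x‖ < 1 := by
  rw [← RingHom.mem_ker, ker_toZMod, ← mem_nonunits]
  rfl

theorem PadicInt.norm_cubicNormForm_eq_one (hc : IsAnisotropicCubicNormForm (c : ZMod p))
    {x y z : ℤ_[p]} (h : ‖x‖ = 1 ∨ ‖y‖ = 1 ∨ ‖z‖ = 1) : ‖cubicNormForm (c : ℤ_[p]) x y z‖ = 1 := by
  refine le_antisymm (norm_le_one _) (not_lt.mp fun hlt ↦ ?_)
  rw [← toZMod_eq_zero_iff, map_cubicNormForm, map_intCast] at hlt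
  obtain ⟨hx, hy, hz⟩ := hc _ _ _ hlt
  simp only [toZMod_eq_zero_iff] at hx hy hz
  rcases h with h | h | h <;> linarith

theorem Padic.norm_cubicNormForm_of_le (hc : IsAnisotropicCubicNormForm (c : ZMod p))
    {x y z w : ℚ_[p]} (hw : w ≠ 0) (hmem : w = x ∨ w = y ∨ w = z)
    (hx : ‖x‖ ≤ ‖w‖) (hy : ‖y‖ ≤ ‖w‖) (hz : ‖z‖ ≤ ‖w‖) :
    ‖cubicNormForm (c : ℚ_[p]) x y z‖ = ‖w‖ ^ 3 := by
  have hw' : 0 < ‖w‖ := norm_pos_iff.mpr hw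
  let scale (t : ℚ_[p]) (ht : ‖t‖ ≤ ‖w‖) : ℤ_[p] :=
    ⟨t / w, by rw [norm_div]; exact div_le_one_of_le₀ ht hw'.le⟩
  have hscale (t : ℚ_[p]) (ht) : ‖scale t ht‖ = ‖t‖ / ‖w‖ := norm_div t w
  have hunit := PadicInt.norm_cubicNormForm_eq_one hc (x := scale x hx) (y := scale y hy)
    (z := scale z hz) (by simp only [hscale]; rcases hmem with rfl | rfl | rfl <;> simp [hw'.ne'])
  have hcoe :
      PadicInt.Coe.ringHom (cubicNormForm (c : ℤ_[p]) (scale x hx) (scale y hy) (scale z hz)) =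
        cubicNormForm (c : ℚ_[p]) (x / w) (y / w) (z / w) :=
    (map_cubicNormForm PadicInt.Coe.ringHom _ _ _ _).trans (by rw [map_intCast]; rfl)
  have hhom : cubicNormForm (c : ℚ_[p]) x y z =
      w ^ 3 * cubicNormForm (c : ℚ_[p]) (x / w) (y / w) (z / w) := by
    rw [← cubicNormForm_mul, mul_div_cancel₀ _ hw, mul_div_cancel₀ _ hw, mul_div_cancel₀ _ hw]
  rw [hhom, norm_mul, norm_pow, ← hcoe]
  exact (congrArg (‖w‖ ^ 3 * ·) hunit).trans (mul_one _)

theorem Padic.cubicNormForm_ne_p (hc : IsAnisotropicCubicNormForm (c : ZMod p)) (x y z : ℚ_[p]) :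
    cubicNormForm (c : ℚ_[p]) x y z ≠ p := by
  classical
  intro h
  obtain ⟨w, hmem, hmax⟩ := Finset.exists_max_image {x, y, z} norm (by simp)
  simp only [Finset.mem_insert, Finset.mem_singleton, forall_eq_or_imp, forall_eq] at hmem hmax
  obtain ⟨hx, hy, hz⟩ := hmax
  have hw : w ≠ 0 := by
    rintro rfl
    simp only [norm_zero, norm_le_zero_iff] at hx hy hz
    subst hx hy hz
    exact (Nat.cast_ne_zero.mpr (Fact.out : p.Prime).ne_zero) (h.symm.trans (cubicNormForm_zero _))
  have hnorm := Padic.norm_cubicNormForm_of_le hc hw hmem hx hy hz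
  rw [h, Padic.norm_p, ← norm_pow, Padic.norm_eq_zpow_neg_valuation (pow_ne_zero 3 hw),
    Padic.valuation_pow, ← zpow_neg_one] at hnorm
  have := zpow_right_injective₀ (by exact_mod_cast (Fact.out : p.Prime).pos)
    (by exact_mod_cast (Fact.out : p.Prime).one_lt.ne') hnorm
  omega

end Padic

instance Nat.fact_prime_nineteen : Fact (Nat.Prime 19) := ⟨by norm_num⟩

theorem Padic.exists_isPrimitiveRoot_three_nineteen : ∃ ζ : ℚ_[19], IsPrimitiveRoot ζ 3 := by
  -- `7² + 7 + 1 = 3 · 19` while `2 · 7 + 1 = 15` is prime to `19`.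
  have h57 : (cyclotomic 3 ℤ_[19]).aeval (7 : ℤ_[19]) = ((57 : ℕ) : ℤ_[19]) := by
    simp [cyclotomic_three]; norm_num
  have h15 : (cyclotomic 3 ℤ_[19]).derivative.aeval (7 : ℤ_[19]) = ((15 : ℕ) : ℤ_[19]) := by
    simp [cyclotomic_three]; norm_num
  have hnorm : ‖(cyclotomic 3 ℤ_[19]).aeval (7 : ℤ_[19])‖ <
      ‖(cyclotomic 3 ℤ_[19]).derivative.aeval (7 : ℤ_[19])‖ ^ 2 := by
    rw [h57, h15, (PadicInt.norm_natCast_eq_one_iff (p := 19) (n := 15)).mpr (by norm_num),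
      one_pow, PadicInt.norm_natCast_lt_one_iff]
    norm_num
  obtain ⟨z, hz, -⟩ := hensels_lemma hnorm
  have hζ : IsPrimitiveRoot z 3 := by
    rwa [← isRoot_cyclotomic_iff_charZero three_pos, IsRoot, ← coe_aeval_eq_eval]
  exact ⟨z, hζ.map_of_injective (f := PadicInt.Coe.ringHom) Subtype.coe_injective⟩

theorem norm_equation_nineteen_not_solvable_general (K : Type) [Field K] [Algebra ℚ K]
    [IsCyclotomicExtension {3} ℚ K]
    (L : Type) [Field L] [Algebra K L]
    (r : L) (hr : r ^ 3 = 5) (hgen : Algebra.adjoin K {r} = ⊤) :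
    ¬ ∃ a : L, Algebra.norm K a = 19 := by
  rintro ⟨a, ha⟩
  have hdeg : Module.finrank ℚ K = 2 := by
    rw [IsCyclotomicExtension.finrank K (cyclotomic.irreducible_rat three_pos),
      Nat.totient_prime Nat.prime_three]
  have hirr : Irreducible (X ^ 3 - C (5 : K)) :=
    X_pow_sub_C_irreducible_of_prime Nat.prime_three fun s ↦ by
      exact_mod_cast pow_ne_prime_of_not_dvd_finrank (q := 5) (by norm_num) (by omega) s
  have hr' : r ^ 3 = algebraMap K L 5 := by rw [hr, map_ofNat]
  obtain ⟨pb, hdim, rfl⟩ := PowerBasis.exists_gen_eq_of_irreducible_X_pow_sub_C hirr hr' hgen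
  obtain ⟨x, y, z, hxyz⟩ := pb.exists_norm_eq_cubicNormForm hdim hr' a
  obtain ⟨ζ, hζ⟩ := Padic.exists_isPrimitiveRoot_three_nineteen
  obtain ⟨φ⟩ := IsCyclotomicExtension.nonempty_algHom_of_isPrimitiveRoot (K := ℚ) (L := K) hζ
  refine Padic.cubicNormForm_ne_p isAnisotropicCubicNormForm_five_zmod_nineteen
    (φ x) (φ y) (φ z) ?_
  have := congrArg φ (hxyz.symm.trans ha)
  rwa [map_cubicNormForm, map_ofNat, map_ofNat, ← Int.cast_ofNat] at this

/-- Let `ε` be a primitive cube root of unity, `K = ℚ(ε)`, and `L = ℚ(ε, ∛5) = K(∛5)`. Then the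
norm equation `N_{L/K}(a) = 19` has no solution `a ∈ L`. -/
theorem norm_equation_nineteen_not_solvable (K : Type) [Field K] [Algebra ℚ K]
    [IsCyclotomicExtension {3} ℚ K] (ε : K) (hε : IsPrimitiveRoot ε 3)
    (L : Type) [Field L] [Algebra K L] [FiniteDimensional K L]
    (r : L) (hr : r ^ 3 = 5) (hgen : Algebra.adjoin K {r} = ⊤) :
    ¬ ∃ a : L, Algebra.norm K a = 19 :=
  norm_equation_nineteen_not_solvable_general K L r hr hgen
end
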